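/- arXiv:1603.07751 — 4 statements merged into one kernel-verified Lean document; each statement's English description precedes it below -/
import Mathlib

section
/- For a strictly convex function f, the information monotonicity inequality D_f(θp, θq) ≤ D_f(p, q) is strict if there exist σ, σ', σ'' with θ(σ,σ')p(σ') > 0, θ(σ,σ'')p(σ'') > 0, and p(σ'')/p(σ') ≠ q(σ'')/q(σ''). -/
open Finset

lemma aux_nonstrict {S : Type*} [Fintype S]
    (f : ℝ → ℝ) (hf : StrictConvexOn ℝ (Set.Ioi 0) f)
    (p q : S → ℝ) (hp : ∀ σ, 0 < p σ) (hq : ∀ σ, 0 < q σ)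
    (w : S → ℝ) (hw : ∀ σ, 0 ≤ w σ) :
    (∑ σ', w σ' * p σ') * f ((∑ σ', w σ' * q σ') / (∑ σ', w σ' * p σ')) ≤
      ∑ σ', w σ' * p σ' * f (q σ' / p σ') := by
  set A := ∑ σ', w σ' * p σ' with hA
  have hA0 : 0 ≤ A := Finset.sum_nonneg fun σ' _ => mul_nonneg (hw σ') (hp σ').le
  rcases hA0.eq_or_lt with h0 | hApos
  · have hzero : ∀ σ' ∈ Finset.univ, w σ' * p σ' = 0 := by
      intro σ' _
      have := (Finset.sum_eq_zero_iff_of_nonneg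
        (fun σ' _ => mul_nonneg (hw σ') (hp σ').le)).mp h0.symm
      exact this σ' (mem_univ σ')
    rw [← h0]
    simp only [zero_mul]
    apply Finset.sum_nonneg
    intro σ' _
    rw [hzero σ' (mem_univ σ')]
    simp
  · have hjensen := hf.convexOn.map_sum_le (t := Finset.univ)
      (w := fun σ' => w σ' * p σ' / A) (p := fun σ' => q σ' / p σ')
      (fun σ' _ => div_nonneg (mul_nonneg (hw σ') (hp σ').le) hApos.le)
      (by rw [← Finset.sum_div, ← hA, div_self hApos.ne'])
      (fun σ' _ => Set.mem_Ioi.mpr (div_pos (hq σ') (hp σ')))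
    have hpt : ∑ σ', (w σ' * p σ' / A) • (q σ' / p σ') = (∑ σ', w σ' * q σ') / A := by
      rw [Finset.sum_div]
      apply Finset.sum_congr rfl
      intro σ' _
      rw [smul_eq_mul]
      field_simp [hApos.ne', (hp σ').ne']
    rw [hpt] at hjensen
    calc A * f ((∑ σ', w σ' * q σ') / A)
        ≤ A * ∑ σ', (w σ' * p σ' / A) • f (q σ' / p σ') :=
          mul_le_mul_of_nonneg_left hjensen hApos.le
      _ = ∑ σ', w σ' * p σ' * f (q σ' / p σ') := by
          rw [Finset.mul_sum]
          apply Finset.sum_congr rfl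
          intro σ' _
          simp only [smul_eq_mul]
          field_simp

lemma aux_strict {S : Type*} [Fintype S]
    (f : ℝ → ℝ) (hf : StrictConvexOn ℝ (Set.Ioi 0) f)
    (p q : S → ℝ) (hp : ∀ σ, 0 < p σ) (hq : ∀ σ, 0 < q σ)
    (w : S → ℝ) (hw : ∀ σ, 0 ≤ w σ)
    (σ₁ σ₂ : S) (h1 : 0 < w σ₁ * p σ₁) (h2 : 0 < w σ₂ * p σ₂)
    (hne : p σ₂ / p σ₁ ≠ q σ₂ / q σ₁) :
    (∑ σ', w σ' * p σ') * f ((∑ σ', w σ' * q σ') / (∑ σ', w σ' * p σ')) <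
      ∑ σ', w σ' * p σ' * f (q σ' / p σ') := by
  classical
  set t := Finset.univ.filter (fun σ' => 0 < w σ' * p σ') with ht
  have hmemt : ∀ σ', σ' ∈ t ↔ 0 < w σ' * p σ' := by
    intro σ'; simp [ht]
  have hzero : ∀ σ', σ' ∉ t → w σ' * p σ' = 0 := by
    intro σ' hσ'
    have := (hmemt σ').not.mp hσ'
    have hnn : 0 ≤ w σ' * p σ' := mul_nonneg (hw σ') (hp σ').le
    linarith [lt_or_eq_of_le hnn]
  have hwzero : ∀ σ', σ' ∉ t → w σ' = 0 := by
    intro σ' hσ'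
    have := hzero σ' hσ'
    rcases mul_eq_zero.mp this with h | h
    · exact h
    · exact absurd h (hp σ').ne'
  have hAt : ∑ σ', w σ' * p σ' = ∑ σ' ∈ t, w σ' * p σ' := by
    rw [eq_comm]
    apply Finset.sum_subset (Finset.subset_univ t)
    intro σ' _ hσ'
    exact hzero σ' hσ'
  have hBt : ∑ σ', w σ' * q σ' = ∑ σ' ∈ t, w σ' * q σ' := by
    rw [eq_comm]
    apply Finset.sum_subset (Finset.subset_univ t)
    intro σ' _ hσ'
    rw [hwzero σ' hσ', zero_mul]
  set A := ∑ σ', w σ' * p σ' with hA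
  have hApos : 0 < A := by
    rw [hAt]
    apply Finset.sum_pos
    · intro σ' hσ'; exact (hmemt σ').mp hσ'
    · exact ⟨σ₁, (hmemt σ₁).mpr h1⟩
  have hne' : q σ₁ / p σ₁ ≠ q σ₂ / p σ₂ := by
    intro h
    apply hne
    rw [div_eq_div_iff (hp σ₁).ne' (hp σ₂).ne'] at h
    rw [div_eq_div_iff (hp σ₁).ne' (hq σ₁).ne']
    linarith
  have hjensen := hf.map_sum_lt (t := t)
      (w := fun σ' => w σ' * p σ' / A) (p := fun σ' => q σ' / p σ')
      (fun σ' hσ' => div_pos ((hmemt σ').mp hσ') hApos)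
      (by rw [← Finset.sum_div, ← hAt]; exact div_self hApos.ne')
      (fun σ' _ => Set.mem_Ioi.mpr (div_pos (hq σ') (hp σ')))
      ⟨σ₁, (hmemt σ₁).mpr h1, σ₂, (hmemt σ₂).mpr h2, hne'⟩
  have hpt : ∑ σ' ∈ t, (w σ' * p σ' / A) • (q σ' / p σ') = (∑ σ', w σ' * q σ') / A := by
    rw [hBt, Finset.sum_div]
    apply Finset.sum_congr rfl
    intro σ' _
    rw [smul_eq_mul]
    field_simp [hApos.ne', (hp σ').ne']
  rw [hpt] at hjensen
  calc A * f ((∑ σ', w σ' * q σ') / A)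
      < A * ∑ σ' ∈ t, (w σ' * p σ' / A) • f (q σ' / p σ') :=
        (mul_lt_mul_iff_right₀ hApos).mpr hjensen
    _ = ∑ σ' ∈ t, w σ' * p σ' * f (q σ' / p σ') := by
        rw [Finset.mul_sum]
        apply Finset.sum_congr rfl
        intro σ' _
        simp only [smul_eq_mul]
        field_simp
    _ = ∑ σ', w σ' * p σ' * f (q σ' / p σ') := by
        apply Finset.sum_subset (Finset.subset_univ t)
        intro σ' _ hσ'
        rw [hzero σ' hσ', zero_mul]

/-- Strictness of information monotonicity for strictly convex `f`. -/
theorem information_monotonicity_strict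
    {S : Type*} [Fintype S]
    (f : ℝ → ℝ) (hf : StrictConvexOn ℝ (Set.Ioi 0) f)
    (p q : S → ℝ)
    (hp : ∀ σ, 0 < p σ) (hq : ∀ σ, 0 < q σ)
    (hpsum : ∑ σ, p σ = 1) (hqsum : ∑ σ, q σ = 1)
    (θ : S → S → ℝ) (hθ : ∀ σ σ', 0 ≤ θ σ σ')
    (hcol : ∀ σ', ∑ σ, θ σ σ' = 1)
    (hstrict : ∃ σ σ' σ'' : S,
      0 < θ σ σ' * p σ' ∧ 0 < θ σ σ'' * p σ'' ∧
      p σ'' / p σ' ≠ q σ'' / q σ') :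
    ∑ σ, (∑ σ', θ σ σ' * p σ') * f ((∑ σ', θ σ σ' * q σ') / (∑ σ', θ σ σ' * p σ')) <
      ∑ σ, p σ * f (q σ / p σ) := by
  obtain ⟨σ₀, σ₁, σ₂, h1, h2, hne⟩ := hstrict
  have key : ∑ σ, (∑ σ', θ σ σ' * p σ') * f ((∑ σ', θ σ σ' * q σ') / (∑ σ', θ σ σ' * p σ')) <
      ∑ σ, ∑ σ', θ σ σ' * p σ' * f (q σ' / p σ') := by
    apply Finset.sum_lt_sum
    · intro σ _
      exact aux_nonstrict f hf p q hp hq (θ σ) (hθ σ)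
    · exact ⟨σ₀, mem_univ σ₀,
        aux_strict f hf p q hp hq (θ σ₀) (hθ σ₀) σ₁ σ₂ h1 h2 hne⟩
  have hswap : ∑ σ, ∑ σ', θ σ σ' * p σ' * f (q σ' / p σ') = ∑ σ, p σ * f (q σ / p σ) := by
    rw [Finset.sum_comm]
    apply Finset.sum_congr rfl
    intro σ' _
    have : ∀ σ, θ σ σ' * p σ' * f (q σ' / p σ') = θ σ σ' * (p σ' * f (q σ' / p σ')) := by
      intro σ; ring
    simp_rw [this, ← Finset.sum_mul, hcol σ', one_mul]
  linarith [key, hswap.le]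
end

section
/- Let g be a convex function on a real vector space (or ℝ^d) whose second derivative along segments is bounded below by a constant d₂ > 0 (i.e., g is d₂-strongly convex). For nonnegative weights λ_u summing to 1 with λ₁, λ₂ > 0 and points x_u, the Jensen gap satisfies Σ_u λ_u g(x_u) − g(Σ_u λ_u x_u) ≥ (d₂/2) · (λ₁λ₂/(λ₁+λ₂)) · ‖x₁ − x₂‖². -/
open Finset

/-- Jensen-gap lower bound for strongly convex functions: if `g` is
`d₂`-strongly convex, then the Jensen gap is at least
`(d₂/2)·(λ₁λ₂/(λ₁+λ₂))·‖x₁ − x₂‖²` for any two weights `λ₁, λ₂ > 0`. -/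
theorem jensen_gap_strongly_convex
    {d : ℕ} (g : EuclideanSpace ℝ (Fin d) → ℝ) (d₂ : ℝ) (hd₂ : 0 < d₂)
    (hg : ∀ x y : EuclideanSpace ℝ (Fin d), ∀ t : ℝ, t ∈ Set.Icc (0:ℝ) 1 →
      (d₂ / 2) * t * (1 - t) * ‖x - y‖ ^ 2 ≤
        t * g x + (1 - t) * g y - g (t • x + (1 - t) • y))
    {U : Type*} [Fintype U]
    (lam : U → ℝ) (x : U → EuclideanSpace ℝ (Fin d))
    (hlam : ∀ u, 0 ≤ lam u) (hsum : ∑ u, lam u = 1)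
    (u₁ u₂ : U) (hne : u₁ ≠ u₂) (h1 : 0 < lam u₁) (h2 : 0 < lam u₂) :
    (d₂ / 2) * (lam u₁ * lam u₂ / (lam u₁ + lam u₂)) * ‖x u₁ - x u₂‖ ^ 2 ≤
      (∑ u, lam u * g (x u)) - g (∑ u, lam u • x u) := by
  classical
  set s : ℝ := lam u₁ + lam u₂ with hs_def
  have hs : 0 < s := by positivity
  set t : ℝ := lam u₁ / s with ht_def
  have ht0 : 0 ≤ t := by positivity
  have ht1 : t ≤ 1 := by
    rw [ht_def, div_le_one hs]; linarith
  have h1t : 1 - t = lam u₂ / s := by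
    rw [ht_def]; field_simp; rw [hs_def]; ring
  set y : EuclideanSpace ℝ (Fin d) := t • x u₁ + (1 - t) • x u₂ with hy_def
  -- strong convexity at the two points, scaled by s
  have hsc := hg (x u₁) (x u₂) t ⟨ht0, ht1⟩
  have hscale : (d₂ / 2) * (lam u₁ * lam u₂ / s) * ‖x u₁ - x u₂‖ ^ 2 ≤
      lam u₁ * g (x u₁) + lam u₂ * g (x u₂) - s * g y := by
    have := mul_le_mul_of_nonneg_left hsc hs.le
    have h1 : s * ((d₂ / 2) * t * (1 - t) * ‖x u₁ - x u₂‖ ^ 2)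
        = (d₂ / 2) * (lam u₁ * lam u₂ / s) * ‖x u₁ - x u₂‖ ^ 2 := by
      rw [h1t, ht_def]; field_simp
    have hst : s * t = lam u₁ := by rw [ht_def]; field_simp
    have hst' : s * (1 - t) = lam u₂ := by rw [h1t]; field_simp
    have h2' : s * (t * g (x u₁) + (1 - t) * g (x u₂) - g (t • x u₁ + (1 - t) • x u₂))
        = lam u₁ * g (x u₁) + lam u₂ * g (x u₂) - s * g y := by
      have e : g (t • x u₁ + (1 - t) • x u₂) = g y := rfl
      rw [e]
      linear_combination g (x u₁) * hst + g (x u₂) * hst'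
    rw [h1, h2'] at this
    exact this
  -- convexity of g
  have hconv : ConvexOn ℝ Set.univ g := by
    refine ⟨convex_univ, fun a _ b _ p q hp hq hpq => ?_⟩
    have h := hg a b p ⟨hp, by linarith⟩
    have hq' : q = 1 - p := by linarith
    have hnn : (0:ℝ) ≤ (d₂ / 2) * p * (1 - p) * ‖a - b‖ ^ 2 := by
      have : (0:ℝ) ≤ 1 - p := by linarith
      positivity
    subst hq'
    simp only [smul_eq_mul]
    linarith
  -- Jensen with the combined point
  set T : Finset U := Finset.univ.erase u₂ with hT_def
  have hu₁T : u₁ ∈ T := Finset.mem_erase.2 ⟨hne, Finset.mem_univ _⟩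
  set w : U → ℝ := Function.update lam u₁ s with hw_def
  set z : U → EuclideanSpace ℝ (Fin d) := Function.update x u₁ y with hz_def
  have hw0 : ∀ i ∈ T, 0 ≤ w i := by
    intro i _
    rcases eq_or_ne i u₁ with rfl | h
    · simp [hw_def, hs.le]
    · simp [hw_def, Function.update_of_ne h, hlam i]
  -- sum decompositions
  have hsum_univ : ∀ f : U → ℝ, ∑ u, f u = f u₂ + (f u₁ + ∑ i ∈ T.erase u₁, f i) := by
    intro f
    rw [Finset.add_sum_erase _ f hu₁T, Finset.add_sum_erase]
    exact Finset.mem_univ _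
  have hw1 : ∑ i ∈ T, w i = 1 := by
    rw [← Finset.add_sum_erase _ w hu₁T]
    have : ∑ i ∈ T.erase u₁, w i = ∑ i ∈ T.erase u₁, lam i := by
      refine Finset.sum_congr rfl fun i hi => ?_
      have : i ≠ u₁ := (Finset.mem_erase.1 hi).1
      simp [hw_def, Function.update_of_ne this]
    rw [this]
    have := hsum_univ lam
    rw [hsum] at this
    simp only [hw_def, Function.update_self]
    linarith
  have hsy : s • y = lam u₁ • x u₁ + lam u₂ • x u₂ := by
    rw [hy_def, smul_add, smul_smul, smul_smul, h1t, ht_def]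
    congr 2 <;> field_simp
  have hzsum : ∑ i ∈ T, w i • z i = ∑ u, lam u • x u := by
    rw [← Finset.add_sum_erase _ (fun i => w i • z i) hu₁T]
    have hrest : ∑ i ∈ T.erase u₁, w i • z i = ∑ i ∈ T.erase u₁, lam i • x i := by
      refine Finset.sum_congr rfl fun i hi => ?_
      have : i ≠ u₁ := (Finset.mem_erase.1 hi).1
      simp [hw_def, hz_def, Function.update_of_ne this]
    rw [hrest]
    have huniv : ∑ u, lam u • x u
        = lam u₂ • x u₂ + (lam u₁ • x u₁ + ∑ i ∈ T.erase u₁, lam i • x i) := by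
      have e1 : ∑ i ∈ T, lam i • x i = lam u₁ • x u₁ + ∑ i ∈ T.erase u₁, lam i • x i :=
        (Finset.add_sum_erase _ (fun u => lam u • x u) hu₁T).symm
      have e2 : ∑ u, lam u • x u = lam u₂ • x u₂ + ∑ i ∈ T, lam i • x i := by
        rw [hT_def]
        exact (Finset.add_sum_erase _ (fun u => lam u • x u) (Finset.mem_univ u₂)).symm
      rw [e2, e1]
    rw [huniv]
    simp only [hw_def, hz_def, Function.update_self]
    rw [hsy]
    abel
  have hjensen := hconv.map_sum_le hw0 hw1 (fun i _ => Set.mem_univ (z i))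
  simp only [smul_eq_mul] at hjensen
  rw [hzsum] at hjensen
  have hgsum : ∑ i ∈ T, w i * g (z i)
      = s * g y + ∑ i ∈ T.erase u₁, lam i * g (x i) := by
    rw [← Finset.add_sum_erase _ (fun i => w i * g (z i)) hu₁T]
    simp only [hw_def, hz_def, Function.update_self]
    congr 1
    refine Finset.sum_congr rfl fun i hi => ?_
    have : i ≠ u₁ := (Finset.mem_erase.1 hi).1
    simp [Function.update_of_ne this]
  have hfin : ∑ u, lam u * g (x u)
      = lam u₂ * g (x u₂) + (lam u₁ * g (x u₁) + ∑ i ∈ T.erase u₁, lam i * g (x i)) :=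
    hsum_univ (fun u => lam u * g (x u))
  rw [hgsum] at hjensen
  have key : lam u₁ * g (x u₁) + lam u₂ * g (x u₂) - s * g y
      ≤ (∑ u, lam u * g (x u)) - g (∑ u, lam u • x u) := by
    rw [hfin]
    linarith [hjensen]
  exact le_trans hscale key
end

section
/- Let m = |Σ|. For any ε > 0, if n > 32m²/ε², then for any column-stochastic matrices θ₁,...,θ_n and any two indices j, k and probability distributions q_s, q_t on Σ with strictly positive entries, |D*(θ_{−j} q_s, θ_{−k} q_t) − D*(θ̄_n q_s, θ̄_n q_t)| < ε, where D* is the Hellinger divergence. -/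
open Finset

lemma sqrt_sub_sq_le_add {x y : ℝ} (hx : 0 ≤ x) (hy : 0 ≤ y) :
    (Real.sqrt x - Real.sqrt y) ^ 2 ≤ x + y := by
  nlinarith [Real.sq_sqrt hx, Real.sq_sqrt hy,
    mul_nonneg (Real.sqrt_nonneg x) (Real.sqrt_nonneg y)]

lemma sqrt_sub_sq_le_abs {x y : ℝ} (hx : 0 ≤ x) (hy : 0 ≤ y) :
    (Real.sqrt x - Real.sqrt y) ^ 2 ≤ |x - y| := by
  rcases le_total y x with h | h
  · rw [abs_of_nonneg (by linarith)]
    nlinarith [Real.sq_sqrt hx, Real.sq_sqrt hy, Real.sqrt_le_sqrt h,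
      Real.sqrt_nonneg y, Real.sqrt_nonneg x]
  · rw [abs_of_nonpos (by linarith)]
    nlinarith [Real.sq_sqrt hx, Real.sq_sqrt hy, Real.sqrt_le_sqrt h,
      Real.sqrt_nonneg y, Real.sqrt_nonneg x]

lemma euc_dist_eq {S : Type*} [Fintype S] (x y : EuclideanSpace ℝ S) :
    dist x y = Real.sqrt (∑ u, (x u - y u) ^ 2) := by
  rw [EuclideanSpace.dist_eq]
  congr 1
  exact Finset.sum_congr rfl fun u _ => by rw [Real.dist_eq, sq_abs]

lemma hell_close {S : Type*} [Fintype S] (a b A B : S → ℝ)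
    (ha : ∀ u, 0 ≤ a u) (hb : ∀ u, 0 ≤ b u) (hA : ∀ u, 0 ≤ A u) (hB : ∀ u, 0 ≤ B u)
    (hsa : ∑ u, a u ≤ 1) (hsb : ∑ u, b u ≤ 1) (hsA : ∑ u, A u ≤ 1) (hsB : ∑ u, B u ≤ 1)
    (δ : ℝ) (hδ : 0 ≤ δ)
    (haA : ∀ u, |a u - A u| ≤ δ) (hbB : ∀ u, |b u - B u| ≤ δ) :
    |(∑ u, (Real.sqrt (a u) - Real.sqrt (b u)) ^ 2) -
     (∑ u, (Real.sqrt (A u) - Real.sqrt (B u)) ^ 2)|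
      ≤ 4 * Real.sqrt 2 * Real.sqrt ((Fintype.card S : ℝ) * δ) := by
  classical
  set v : (S → ℝ) → EuclideanSpace ℝ S := fun p => WithLp.toLp 2 (fun u => Real.sqrt (p u)) with hv
  have hd : ∀ p q : S → ℝ,
      dist (v p) (v q) = Real.sqrt (∑ u, (Real.sqrt (p u) - Real.sqrt (q u)) ^ 2) := by
    intro p q; exact (euc_dist_eq _ _).trans rfl
  have hsumnn : ∀ p q : S → ℝ, 0 ≤ ∑ u, (Real.sqrt (p u) - Real.sqrt (q u)) ^ 2 :=
    fun p q => Finset.sum_nonneg fun u _ => sq_nonneg _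
  have hdsq : ∀ p q : S → ℝ,
      (dist (v p) (v q)) ^ 2 = ∑ u, (Real.sqrt (p u) - Real.sqrt (q u)) ^ 2 := by
    intro p q; rw [hd]; exact Real.sq_sqrt (hsumnn p q)
  -- bounds by √2
  have hle2 : ∀ p q : S → ℝ, (∀ u, 0 ≤ p u) → (∀ u, 0 ≤ q u) →
      (∑ u, p u ≤ 1) → (∑ u, q u ≤ 1) → dist (v p) (v q) ≤ Real.sqrt 2 := by
    intro p q hp hq hsp hsq
    rw [hd]
    apply Real.sqrt_le_sqrt
    calc ∑ u, (Real.sqrt (p u) - Real.sqrt (q u)) ^ 2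
        ≤ ∑ u, (p u + q u) :=
          Finset.sum_le_sum fun u _ => sqrt_sub_sq_le_add (hp u) (hq u)
      _ = (∑ u, p u) + (∑ u, q u) := Finset.sum_add_distrib
      _ ≤ 2 := by linarith
  have hled : ∀ p q : S → ℝ, (∀ u, 0 ≤ p u) → (∀ u, 0 ≤ q u) →
      (∀ u, |p u - q u| ≤ δ) → dist (v p) (v q) ≤ Real.sqrt ((Fintype.card S : ℝ) * δ) := by
    intro p q hp hq hpq
    rw [hd]
    apply Real.sqrt_le_sqrt
    calc ∑ u, (Real.sqrt (p u) - Real.sqrt (q u)) ^ 2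
        ≤ ∑ u, |p u - q u| :=
          Finset.sum_le_sum fun u _ => sqrt_sub_sq_le_abs (hp u) (hq u)
      _ ≤ ∑ _u : S, δ := Finset.sum_le_sum fun u _ => hpq u
      _ = (Fintype.card S : ℝ) * δ := by
          rw [Finset.sum_const, nsmul_eq_mul]; rfl
  set d1 := dist (v a) (v b)
  set d2 := dist (v A) (v B)
  set e1 := dist (v a) (v A)
  set e2 := dist (v b) (v B)
  have htri : |d1 - d2| ≤ e1 + e2 := by
    have h := dist_dist_dist_le (v a) (v b) (v A) (v B)
    rwa [Real.dist_eq] at h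
  have h12 : d1 ≤ Real.sqrt 2 := hle2 a b ha hb hsa hsb
  have h22 : d2 ≤ Real.sqrt 2 := hle2 A B hA hB hsA hsB
  have he1 : e1 ≤ Real.sqrt ((Fintype.card S : ℝ) * δ) := hled a A ha hA haA
  have he2 : e2 ≤ Real.sqrt ((Fintype.card S : ℝ) * δ) := hled b B hb hB hbB
  have hd1n : 0 ≤ d1 := dist_nonneg
  have hd2n : 0 ≤ d2 := dist_nonneg
  have he1n : 0 ≤ e1 := dist_nonneg
  have he2n : 0 ≤ e2 := dist_nonneg
  rw [← hdsq a b, ← hdsq A B]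
  have habs : |d1 ^ 2 - d2 ^ 2| = |d1 - d2| * (d1 + d2) := by
    rw [show d1 ^ 2 - d2 ^ 2 = (d1 - d2) * (d1 + d2) by ring, abs_mul,
      abs_of_nonneg (add_nonneg hd1n hd2n)]
  rw [habs]
  calc |d1 - d2| * (d1 + d2)
      ≤ (e1 + e2) * (Real.sqrt 2 + Real.sqrt 2) := by
        apply mul_le_mul htri (by linarith) (by linarith) (by linarith)
    _ ≤ (Real.sqrt ((Fintype.card S : ℝ) * δ) + Real.sqrt ((Fintype.card S : ℝ) * δ)) *
          (Real.sqrt 2 + Real.sqrt 2) := by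
        apply mul_le_mul_of_nonneg_right (by linarith)
        positivity
    _ = 4 * Real.sqrt 2 * Real.sqrt ((Fintype.card S : ℝ) * δ) := by ring

lemma rowsum {S : Type*} [Fintype S] (M : S → S → ℝ) (q : S → ℝ)
    (hM : ∀ σ', ∑ u, M u σ' = 1) (hq : ∑ σ, q σ = 1) :
    ∑ u, ∑ σ', M u σ' * q σ' = 1 := by
  rw [Finset.sum_comm]
  calc ∑ σ', ∑ u, M u σ' * q σ'
      = ∑ σ', q σ' := Finset.sum_congr rfl fun σ' _ => by
        rw [← Finset.sum_mul, hM, one_mul]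
    _ = 1 := hq

lemma vec_close {S : Type*} [Fintype S] (c1 c2 q : S → ℝ) (δ : ℝ)
    (hq : ∀ σ, 0 ≤ q σ) (hqs : ∑ σ, q σ = 1) (h : ∀ σ, |c1 σ - c2 σ| ≤ δ) :
    |(∑ σ, c1 σ * q σ) - ∑ σ, c2 σ * q σ| ≤ δ := by
  rw [← Finset.sum_sub_distrib]
  calc |∑ σ, (c1 σ * q σ - c2 σ * q σ)|
      ≤ ∑ σ, |c1 σ * q σ - c2 σ * q σ| := Finset.abs_sum_le_sum_abs _ _
    _ ≤ ∑ σ, δ * q σ := Finset.sum_le_sum fun σ _ => by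
        rw [← sub_mul, abs_mul, abs_of_nonneg (hq σ)]
        exact mul_le_mul_of_nonneg_right (h σ) (hq σ)
    _ = δ := by rw [← Finset.mul_sum, hqs, mul_one]

/-- Lemma 4 of the paper: if `n > 32 m² / ε²`, then for any signal strategies
the Hellinger divergence between the best predictions `θ_{−j} q_s, θ_{−k} q_t`
is within `ε` of the divergence between the symmetrized predictions
`θ̄_n q_s, θ̄_n q_t`. -/
theorem symmetrization_close
    {S : Type*} [Fintype S]
    (n : ℕ)
    (ε : ℝ) (hε : 0 < ε)
    (hn : 32 * (Fintype.card S : ℝ) ^ 2 / ε ^ 2 < (n : ℝ))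
    (θ : Fin n → S → S → ℝ)
    (hθnn : ∀ i σ σ', 0 ≤ θ i σ σ')
    (hcol : ∀ i σ', ∑ σ, θ i σ σ' = 1)
    (j k : Fin n)
    (qs qt : S → ℝ) (hqs : ∀ σ, 0 < qs σ) (hqt : ∀ σ, 0 < qt σ)
    (hqssum : ∑ σ, qs σ = 1) (hqtsum : ∑ σ, qt σ = 1) :
    |(∑ u, (Real.sqrt (∑ σ', ((1 / ((n : ℝ) - 1)) * ∑ i ∈ Finset.univ \ {j}, θ i u σ') * qs σ') -
            Real.sqrt (∑ σ', ((1 / ((n : ℝ) - 1)) * ∑ i ∈ Finset.univ \ {k}, θ i u σ') * qt σ')) ^ 2) -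
     (∑ u, (Real.sqrt (∑ σ', ((1 / (n : ℝ)) * ∑ i, θ i u σ') * qs σ') -
            Real.sqrt (∑ σ', ((1 / (n : ℝ)) * ∑ i, θ i u σ') * qt σ')) ^ 2)| < ε := by
  classical
  have hSne : Nonempty S := by
    by_contra h
    rw [not_nonempty_iff] at h
    rw [Finset.univ_eq_empty, Finset.sum_empty] at hqssum
    norm_num at hqssum
  have hm1 : (1 : ℝ) ≤ (Fintype.card S : ℝ) := by
    exact_mod_cast Fintype.card_pos
  set m : ℝ := (Fintype.card S : ℝ) with hm
  have hε2 : 0 < ε ^ 2 := by positivity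
  have hn1 : 1 ≤ n := by
    by_contra h
    push_neg at h
    interval_cases n
    · exact absurd j.2 (by omega)
  have hN1 : (1 : ℝ) ≤ (n : ℝ) := by exact_mod_cast hn1
  set N : ℝ := (n : ℝ) with hNdef
  have hN0 : 0 < N := by linarith
  -- θ entries are ≤ 1
  have hθle1 : ∀ i u σ', θ i u σ' ≤ 1 := by
    intro i u σ'
    calc θ i u σ' ≤ ∑ σ, θ i σ σ' :=
          Finset.single_le_sum (fun σ _ => hθnn i σ σ') (Finset.mem_univ u)
      _ = 1 := hcol i σ'
  -- averaged matrix column sums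
  have hbarcol : ∀ σ', ∑ u, (1 / N) * ∑ i, θ i u σ' = 1 := by
    intro σ'
    rw [← Finset.mul_sum, Finset.sum_comm]
    rw [Finset.sum_congr rfl fun i _ => hcol i σ']
    simp [hNdef]
    field_simp
  -- nonnegativity & sums of the symmetrized predictions
  have hAnn : ∀ (q : S → ℝ), (∀ σ, 0 ≤ q σ) →
      ∀ u, 0 ≤ ∑ σ', ((1 / N) * ∑ i, θ i u σ') * q σ' := by
    intro q hq u
    exact Finset.sum_nonneg fun σ' _ => mul_nonneg (mul_nonneg (by positivity)
      (Finset.sum_nonneg fun i _ => hθnn i u σ')) (hq σ')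
  have hAsum : ∀ (q : S → ℝ), (∑ σ, q σ = 1) →
      ∑ u, ∑ σ', ((1 / N) * ∑ i, θ i u σ') * q σ' = 1 := by
    intro q hq
    exact rowsum _ q hbarcol hq
  rcases eq_or_lt_of_le hn1 with h1 | h2
  · -- n = 1 case
    have hneq : N - 1 = 0 := by rw [hNdef, ← h1]; norm_num
    have hz : ∀ (l : Fin n) (q : S → ℝ) (u : S),
        (∑ σ', ((1 / (N - 1)) * ∑ i ∈ Finset.univ \ {l}, θ i u σ') * q σ') = 0 := by
      intro l q u
      rw [hneq]
      simp
    simp only [hz j qs, hz k qt, Real.sqrt_zero, sub_self, ne_eq]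
    rw [show (∑ _x : S, (0:ℝ) ^ 2) = 0 by simp, zero_sub, abs_neg]
    have hD2 : ∑ u, (Real.sqrt (∑ σ', ((1 / N) * ∑ i, θ i u σ') * qs σ') -
            Real.sqrt (∑ σ', ((1 / N) * ∑ i, θ i u σ') * qt σ')) ^ 2 ≤ 2 := by
      calc ∑ u, (Real.sqrt (∑ σ', ((1 / N) * ∑ i, θ i u σ') * qs σ') -
            Real.sqrt (∑ σ', ((1 / N) * ∑ i, θ i u σ') * qt σ')) ^ 2
          ≤ ∑ u, ((∑ σ', ((1 / N) * ∑ i, θ i u σ') * qs σ') +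
              ∑ σ', ((1 / N) * ∑ i, θ i u σ') * qt σ') :=
            Finset.sum_le_sum fun u _ => sqrt_sub_sq_le_add
              (hAnn qs (fun σ => (hqs σ).le) u) (hAnn qt (fun σ => (hqt σ).le) u)
        _ = 2 := by
            rw [Finset.sum_add_distrib, hAsum qs hqssum, hAsum qt hqtsum]; norm_num
    have hDnn : 0 ≤ ∑ u, (Real.sqrt (∑ σ', ((1 / N) * ∑ i, θ i u σ') * qs σ') -
            Real.sqrt (∑ σ', ((1 / N) * ∑ i, θ i u σ') * qt σ')) ^ 2 :=
      Finset.sum_nonneg fun u _ => sq_nonneg _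
    rw [abs_of_nonneg hDnn]
    -- ε² > 32 m² ≥ 32
    have hNeq1 : N = 1 := by rw [hNdef, ← h1]; norm_num
    have : 32 * m ^ 2 < ε ^ 2 := by
      rw [div_lt_iff₀ hε2, hNeq1, one_mul] at hn
      exact hn
    nlinarith
  · -- n ≥ 2 case
    have hN2 : (2 : ℝ) ≤ N := by
      have h : (2 : ℕ) ≤ n := h2
      rw [hNdef]
      exact_mod_cast h
    have hN1' : 0 < N - 1 := by linarith
    -- the minus-one matrices: column sums = 1
    have hmcol : ∀ (l : Fin n) σ',
        ∑ u, (1 / (N - 1)) * ∑ i ∈ Finset.univ \ {l}, θ i u σ' = 1 := by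
      intro l σ'
      rw [← Finset.mul_sum, Finset.sum_comm]
      rw [Finset.sum_congr rfl fun i _ => hcol i σ']
      rw [Finset.sum_const, Finset.card_sdiff_of_subset (Finset.subset_univ _)]
      simp only [Finset.card_univ, Fintype.card_fin, Finset.card_singleton, nsmul_eq_mul,
        mul_one]
      rw [Nat.cast_sub hn1, Nat.cast_one]
      field_simp
      rfl
    have hmnn : ∀ (l : Fin n) (q : S → ℝ), (∀ σ, 0 ≤ q σ) →
        ∀ u, 0 ≤ ∑ σ', ((1 / (N - 1)) * ∑ i ∈ Finset.univ \ {l}, θ i u σ') * q σ' := by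
      intro l q hq u
      exact Finset.sum_nonneg fun σ' _ => mul_nonneg (mul_nonneg (by positivity)
        (Finset.sum_nonneg fun i _ => hθnn i u σ')) (hq σ')
    have hmsum : ∀ (l : Fin n) (q : S → ℝ), (∑ σ, q σ = 1) →
        ∑ u, ∑ σ', ((1 / (N - 1)) * ∑ i ∈ Finset.univ \ {l}, θ i u σ') * q σ' = 1 := by
      intro l q hq
      exact rowsum _ q (hmcol l) hq
    -- entrywise bound between the two matrices
    have hentry : ∀ (l : Fin n) u σ',
        |(1 / (N - 1)) * ∑ i ∈ Finset.univ \ {l}, θ i u σ' -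
          (1 / N) * ∑ i, θ i u σ'| ≤ 1 / N := by
      intro l u σ'
      set s := ∑ i ∈ Finset.univ \ {l}, θ i u σ' with hs
      set t := θ l u σ' with ht
      have hsplit : ∑ i, θ i u σ' = s + t := by
        rw [hs, ht, Finset.sum_eq_sum_sdiff_singleton_add (Finset.mem_univ l)]
      have hsnn : 0 ≤ s := Finset.sum_nonneg fun i _ => hθnn i u σ'
      have hsle : s ≤ N - 1 := by
        calc s ≤ ∑ _i ∈ Finset.univ \ {l}, (1:ℝ) :=
              Finset.sum_le_sum fun i _ => hθle1 i u σ'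
          _ = N - 1 := by
              rw [Finset.sum_const, Finset.card_sdiff_of_subset (Finset.subset_univ _)]
              simp only [Finset.card_univ, Fintype.card_fin, Finset.card_singleton,
                nsmul_eq_mul, mul_one]
              rw [Nat.cast_sub hn1, Nat.cast_one]
      have htnn : 0 ≤ t := hθnn l u σ'
      have htle : t ≤ 1 := hθle1 l u σ'
      rw [hsplit]
      have heq : (1 / (N - 1)) * s - (1 / N) * (s + t) =
          (s - (N - 1) * t) / ((N - 1) * N) := by
        field_simp
        ring
      rw [heq, abs_div, abs_of_pos (show (0:ℝ) < (N - 1) * N by positivity),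
        div_le_div_iff₀ (by positivity) hN0]
      have hnum : |s - (N - 1) * t| ≤ N - 1 := by
        rw [abs_le]
        constructor <;> nlinarith
      nlinarith [abs_nonneg (s - (N - 1) * t)]
    -- prediction-level bounds
    have hpred : ∀ (l : Fin n) (q : S → ℝ), (∀ σ, 0 < q σ) → (∑ σ, q σ = 1) →
        ∀ u, |(∑ σ', ((1 / (N - 1)) * ∑ i ∈ Finset.univ \ {l}, θ i u σ') * q σ') -
              ∑ σ', ((1 / N) * ∑ i, θ i u σ') * q σ'| ≤ 1 / N := by
      intro l q hq hqsum u
      exact vec_close _ _ q (1 / N) (fun σ => (hq σ).le) hqsum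
        (fun σ' => hentry l u σ')
    have key := hell_close
      (fun u => ∑ σ', ((1 / (N - 1)) * ∑ i ∈ Finset.univ \ {j}, θ i u σ') * qs σ')
      (fun u => ∑ σ', ((1 / (N - 1)) * ∑ i ∈ Finset.univ \ {k}, θ i u σ') * qt σ')
      (fun u => ∑ σ', ((1 / N) * ∑ i, θ i u σ') * qs σ')
      (fun u => ∑ σ', ((1 / N) * ∑ i, θ i u σ') * qt σ')
      (hmnn j qs fun σ => (hqs σ).le) (hmnn k qt fun σ => (hqt σ).le)
      (hAnn qs fun σ => (hqs σ).le) (hAnn qt fun σ => (hqt σ).le)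
      (le_of_eq (hmsum j qs hqssum)) (le_of_eq (hmsum k qt hqtsum))
      (le_of_eq (hAsum qs hqssum)) (le_of_eq (hAsum qt hqtsum))
      (1 / N) (by positivity)
      (hpred j qs hqs hqssum) (hpred k qt hqt hqtsum)
    refine lt_of_le_of_lt key ?_
    -- arithmetic: 4√2 √(m/N) < ε
    have hmm : 32 * m / ε ^ 2 < N := by
      have hmsq : m ≤ m ^ 2 := by nlinarith
      calc 32 * m / ε ^ 2 ≤ 32 * m ^ 2 / ε ^ 2 := by gcongr
        _ < N := hn
    have hlt : 32 * (m * (1 / N)) < ε ^ 2 := by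
      rw [div_lt_iff₀ hε2] at hmm
      rw [show 32 * (m * (1 / N)) = 32 * m / N by ring, div_lt_iff₀ hN0]
      nlinarith
    have hsqrt32 : Real.sqrt 32 = 4 * Real.sqrt 2 := by
      rw [show (32:ℝ) = 4 ^ 2 * 2 by norm_num, Real.sqrt_mul (by positivity),
        Real.sqrt_sq (by norm_num)]
    have heq4 : 4 * Real.sqrt 2 * Real.sqrt (m * (1 / N)) =
        Real.sqrt (32 * (m * (1 / N))) := by
      rw [Real.sqrt_mul (by norm_num : (0:ℝ) ≤ 32), hsqrt32]
    rw [heq4]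
    exact (Real.sqrt_lt' hε).mpr hlt
end

section
/- For probability distributions p, q on a finite set and a column-stochastic matrix θ satisfying θ(u,v')p(v') > 0, θ(u,w')p(w') > 0 for some u, v'≠w', and p, q strictly positive, the gap D*(p,q) − D*(θp, θq) ≥ (d₂/2)·(λ₁λ₂/(λ₁+λ₂))·‖q(v')/p(v') − q(w')/p(w')‖², where λ₁ = θ(u,v')p(v'), λ₂ = θ(u,w')p(w'), D*(p,q) = Σ_v p(v)f(q(v)/p(v)) with f(x) = (√x − 1)², and d₂ is a lower bound on f'' on the relevant interval. -/
open Finset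

/-- Two-point variance bound: `ab/(a+b)·(u−v)² ≤ a·u² + b·v²`. -/
lemma hmg_two_point (a b u v : ℝ) (ha : 0 < a) (hb : 0 < b) :
    a * b / (a + b) * (u - v) ^ 2 ≤ a * u ^ 2 + b * v ^ 2 := by
  rw [div_mul_eq_mul_div, div_le_iff₀ (by positivity)]
  nlinarith [sq_nonneg (a * u + b * v)]

/-- Weighted Jensen inequality over a finite type, with unnormalized
nonnegative weights. -/
lemma hmg_jensen {S : Type*} [Fintype S] {m M : ℝ} {f : ℝ → ℝ}
    (hf : ConvexOn ℝ (Set.Icc m M) f) (w y : S → ℝ)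
    (hw : ∀ v, 0 ≤ w v) (hy : ∀ v, y v ∈ Set.Icc m M) :
    (∑ v, w v) * f ((∑ v, w v * y v) / (∑ v, w v)) ≤ ∑ v, w v * f (y v) := by
  rcases eq_or_lt_of_le (Finset.sum_nonneg fun v _ => hw v) with h0 | hW
  · have hz : ∀ v ∈ Finset.univ, w v = 0 :=
      (Finset.sum_eq_zero_iff_of_nonneg (fun v _ => hw v)).1 h0.symm
    rw [← h0, zero_mul]
    apply Finset.sum_nonneg
    intro v hv
    rw [hz v hv, zero_mul]
  · have hWne : (∑ v, w v) ≠ 0 := hW.ne'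
    have h := hf.map_sum_le (t := Finset.univ) (w := fun v => w v / ∑ v, w v)
      (p := y) (fun v _ => div_nonneg (hw v) hW.le)
      (by rw [← Finset.sum_div, div_self hWne]) (fun v _ => hy v)
    simp only [smul_eq_mul] at h
    have hxbar : ∑ v, w v / (∑ v, w v) * y v = (∑ v, w v * y v) / (∑ v, w v) := by
      rw [Finset.sum_div]
      exact Finset.sum_congr rfl fun v _ => by ring
    rw [hxbar] at h
    calc (∑ v, w v) * f ((∑ v, w v * y v) / (∑ v, w v))
        ≤ (∑ v, w v) * ∑ v, w v / (∑ v, w v) * f (y v) :=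
          mul_le_mul_of_nonneg_left h hW.le
      _ = ∑ v, w v * f (y v) := by
          rw [Finset.mul_sum]
          exact Finset.sum_congr rfl fun v _ => by field_simp

/-- Convexity of `x ↦ (√x−1)² − (c/2)x²` on an interval where
`c ≤ 1/(2x√x)` (the second derivative of `(√x−1)²`). -/
lemma hmg_convexOn (m M c : ℝ) (hm : 0 < m)
    (hc : ∀ x ∈ Set.Icc m M, c ≤ 1 / (2 * x * Real.sqrt x)) :
    ConvexOn ℝ (Set.Icc m M) (fun t => (Real.sqrt t - 1) ^ 2 - c / 2 * t ^ 2) := by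
  apply convexOn_of_hasDerivWithinAt2_nonneg (convex_Icc m M)
    (f' := fun t => 1 - (Real.sqrt t)⁻¹ - c * t)
    (f'' := fun t => 1 / (2 * t * Real.sqrt t) - c)
  · exact (((Real.continuous_sqrt.sub continuous_const).pow 2).sub
      ((continuous_const.mul (continuous_pow 2)))).continuousOn
  · intro x hx
    rw [interior_Icc] at hx
    have hx0 : 0 < x := lt_trans hm hx.1
    have hsx : 0 < Real.sqrt x := Real.sqrt_pos.2 hx0
    have hs : HasDerivAt Real.sqrt (1 / (2 * Real.sqrt x)) x :=
      Real.hasDerivAt_sqrt hx0.ne'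
    have h1 : HasDerivAt (fun t => (Real.sqrt t - 1) ^ 2)
        ((2 : ℕ) * (Real.sqrt x - 1) ^ 1 * (1 / (2 * Real.sqrt x))) x :=
      (hs.sub_const 1).pow 2
    have h2 : HasDerivAt (fun t => c / 2 * t ^ 2) (c / 2 * ((2 : ℕ) * x ^ 1)) x :=
      (hasDerivAt_pow 2 x).const_mul (c / 2)
    have h := (h1.sub h2).hasDerivWithinAt (s := interior (Set.Icc m M))
    refine h.congr_deriv ?_
    field_simp
    ring
  · intro x hx
    rw [interior_Icc] at hx
    have hx0 : 0 < x := lt_trans hm hx.1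
    have hsx : 0 < Real.sqrt x := Real.sqrt_pos.2 hx0
    have hs : HasDerivAt Real.sqrt (1 / (2 * Real.sqrt x)) x :=
      Real.hasDerivAt_sqrt hx0.ne'
    have hinv : HasDerivAt (fun t => (Real.sqrt t)⁻¹)
        (-(1 / (2 * Real.sqrt x)) / (Real.sqrt x) ^ 2) x := hs.inv hsx.ne'
    have h3 : HasDerivAt (fun t => 1 - (Real.sqrt t)⁻¹)
        (0 - -(1 / (2 * Real.sqrt x)) / (Real.sqrt x) ^ 2) x :=
      (hasDerivAt_const x (1 : ℝ)).sub hinv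
    have h4 : HasDerivAt (fun t => c * t) (c * 1) x :=
      (hasDerivAt_id x).const_mul c
    have h := (h3.sub h4).hasDerivWithinAt (s := interior (Set.Icc m M))
    refine h.congr_deriv ?_
    rw [Real.sq_sqrt hx0.le]
    field_simp
    ring
  · intro x hx
    rw [interior_Icc] at hx
    exact sub_nonneg.2 (hc x (Set.Ioo_subset_Icc_self hx))

/-- Quantitative gap in information monotonicity for the Hellinger divergence
`D*(p,q) = Σ_v p(v) f(q(v)/p(v))` with `f(x) = (√x−1)²`: if a row `u` of `θ`
has two entries `θ(u,v')p(v') > 0` and `θ(u,w')p(w') > 0`, then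
`D*(p,q) − D*(θp,θq) ≥ (d₂/2)·(λ₁λ₂/(λ₁+λ₂))·(q(v')/p(v') − q(w')/p(w'))²`,
where `d₂` lower-bounds `f''` on the interval of likelihood ratios. -/
theorem hellinger_monotonicity_gap
    {S : Type*} [Fintype S]
    (p q : S → ℝ)
    (hp : ∀ v, 0 < p v) (hq : ∀ v, 0 < q v)
    (hpsum : ∑ v, p v = 1) (hqsum : ∑ v, q v = 1)
    (θ : S → S → ℝ)
    (hθnn : ∀ u v, 0 ≤ θ u v)
    (hcol : ∀ v, ∑ u, θ u v = 1)
    (u v' w' : S) (hvw : v' ≠ w')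
    (hlam1 : 0 < θ u v' * p v') (hlam2 : 0 < θ u w' * p w')
    (d₂ : ℝ)
    (hd₂ : ∀ x ∈ Set.Icc (⨅ v, q v / p v) (⨆ v, q v / p v),
      d₂ ≤ (1 / 2) * x ^ (-(3:ℝ) / 2)) :
    (d₂ / 2) * ((θ u v' * p v') * (θ u w' * p w') / (θ u v' * p v' + θ u w' * p w')) *
        (q v' / p v' - q w' / p w') ^ 2 ≤
      (∑ v, p v * (Real.sqrt (q v / p v) - 1) ^ 2) -
        ∑ s, (∑ v, θ s v * p v) *
          (Real.sqrt ((∑ v, θ s v * q v) / (∑ v, θ s v * p v)) - 1) ^ 2 := by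
  classical
  have : Nonempty S := ⟨u⟩
  set x : S → ℝ := fun v => q v / p v with hxdef
  set f : ℝ → ℝ := fun t => (Real.sqrt t - 1) ^ 2 with hfdef
  set m : ℝ := ⨅ v, x v with hmdef
  set M : ℝ := ⨆ v, x v with hMdef
  have hxpos : ∀ v, 0 < x v := fun v => div_pos (hq v) (hp v)
  have hbb : BddBelow (Set.range x) := (Set.finite_range x).bddBelow
  have hba : BddAbove (Set.range x) := (Set.finite_range x).bddAbove
  have hmem : ∀ v, x v ∈ Set.Icc m M := fun v => ⟨ciInf_le hbb v, le_ciSup hba v⟩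
  have hm : 0 < m := by
    obtain ⟨v₀, hv₀⟩ := Finite.exists_min x
    exact lt_of_lt_of_le (hxpos v₀) (le_ciInf hv₀)
  -- convert the second-derivative bound
  have hd₂' : ∀ y ∈ Set.Icc m M, d₂ ≤ 1 / (2 * y * Real.sqrt y) := by
    intro y hy
    have hy0 : 0 < y := lt_of_lt_of_le hm hy.1
    have hsy : 0 < Real.sqrt y := Real.sqrt_pos.2 hy0
    have h := hd₂ y hy
    have h32 : y ^ (-(3:ℝ) / 2) = (y * Real.sqrt y)⁻¹ := by
      rw [show (-(3:ℝ) / 2) = -(3 / 2) by ring, Real.rpow_neg hy0.le]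
      congr 1
      rw [show ((3:ℝ) / 2) = 1 + 1 / 2 by norm_num, Real.rpow_add hy0,
        Real.rpow_one, ← Real.sqrt_eq_rpow]
    rw [h32] at h
    calc d₂ ≤ 1 / 2 * (y * Real.sqrt y)⁻¹ := h
      _ = 1 / (2 * y * Real.sqrt y) := by field_simp
  have hconvf : ConvexOn ℝ (Set.Icc m M) f := by
    have h := hmg_convexOn m M 0 hm (fun y hy => by
      have hy0 : 0 < y := lt_of_lt_of_le hm hy.1
      have hsy : 0 < Real.sqrt y := Real.sqrt_pos.2 hy0
      positivity)
    have he : (fun t => (Real.sqrt t - 1) ^ 2 - (0:ℝ) / 2 * t ^ 2) = f := by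
      funext t; simp [hfdef]
    rwa [he] at h
  have hconvG : ConvexOn ℝ (Set.Icc m M)
      (fun t => f t - d₂ / 2 * t ^ 2) := hmg_convexOn m M d₂ hm hd₂'
  have hwnn : ∀ s v, 0 ≤ θ s v * p v := fun s v => mul_nonneg (hθnn s v) (hp v).le
  -- rewrite transported q-mass as weighted likelihood ratios
  have hQ : ∀ s, ∑ v, θ s v * q v = ∑ v, (θ s v * p v) * x v := by
    intro s
    refine Finset.sum_congr rfl fun v _ => ?_
    have : x v = q v / p v := rfl
    rw [this]
    have hpv : p v ≠ 0 := (hp v).ne'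
    field_simp
  -- per-row Jensen
  have hterm : ∀ s, (∑ v, θ s v * p v) *
      f ((∑ v, θ s v * q v) / (∑ v, θ s v * p v)) ≤ ∑ v, (θ s v * p v) * f (x v) := by
    intro s
    rw [hQ s]
    exact hmg_jensen hconvf (fun v => θ s v * p v) x (hwnn s) hmem
  -- total first term splits over rows
  have hswap : ∑ v, p v * f (x v) = ∑ s, ∑ v, (θ s v * p v) * f (x v) := by
    rw [Finset.sum_comm]
    refine Finset.sum_congr rfl fun v _ => ?_
    have : ∑ s, (θ s v * p v) * f (x v) = (∑ s, θ s v) * (p v * f (x v)) := by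
      rw [Finset.sum_mul]
      exact Finset.sum_congr rfl fun s _ => by ring
    rw [this, hcol v, one_mul]
  have hgap : (∑ v, p v * f (x v)) -
      (∑ s, (∑ v, θ s v * p v) * f ((∑ v, θ s v * q v) / (∑ v, θ s v * p v)))
      = ∑ s, ((∑ v, (θ s v * p v) * f (x v)) -
        (∑ v, θ s v * p v) * f ((∑ v, θ s v * q v) / (∑ v, θ s v * p v))) := by
    rw [hswap, Finset.sum_sub_distrib]
  show (d₂ / 2) * ((θ u v' * p v') * (θ u w' * p w') / (θ u v' * p v' + θ u w' * p w')) *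
        (x v' - x w') ^ 2 ≤
      (∑ v, p v * f (x v)) -
        ∑ s, (∑ v, θ s v * p v) * f ((∑ v, θ s v * q v) / (∑ v, θ s v * p v))
  rw [hgap]
  have htermnn : ∀ s ∈ Finset.univ, (0:ℝ) ≤ (∑ v, (θ s v * p v) * f (x v)) -
      (∑ v, θ s v * p v) * f ((∑ v, θ s v * q v) / (∑ v, θ s v * p v)) :=
    fun s _ => sub_nonneg.2 (hterm s)
  rcases le_or_gt d₂ 0 with hneg | hpos
  · -- trivial case: LHS ≤ 0
    refine le_trans ?_ (Finset.sum_nonneg htermnn)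
    have h1 : (θ u v' * p v') * (θ u w' * p w') / (θ u v' * p v' + θ u w' * p w') ≥ 0 := by
      positivity
    have : d₂ / 2 * ((θ u v' * p v') * (θ u w' * p w') / (θ u v' * p v' + θ u w' * p w')) ≤ 0 :=
      mul_nonpos_of_nonpos_of_nonneg (by linarith) h1
    exact mul_nonpos_of_nonpos_of_nonneg this (sq_nonneg _)
  · -- quantitative case
    refine le_trans ?_ (Finset.single_le_sum htermnn (Finset.mem_univ u))
    have hW : 0 < ∑ v, θ u v * p v :=
      lt_of_lt_of_le hlam1 (Finset.single_le_sum (f := fun v => θ u v * p v)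
        (fun v _ => hwnn u v) (Finset.mem_univ v'))
    set W : ℝ := ∑ v, θ u v * p v with hWdef
    set xb : ℝ := (∑ v, (θ u v * p v) * x v) / W with hxbdef
    have hsum_wx : ∑ v, (θ u v * p v) * x v = W * xb := by
      rw [hxbdef, mul_div_cancel₀ _ hW.ne']
    -- Jensen for the strongly-convex part
    have hG := hmg_jensen hconvG (fun v => θ u v * p v) x (hwnn u) hmem
    rw [← hxbdef] at hG
    have hGr : ∑ v, (θ u v * p v) * (f (x v) - d₂ / 2 * (x v) ^ 2)
        = (∑ v, (θ u v * p v) * f (x v)) - d₂ / 2 * ∑ v, (θ u v * p v) * (x v) ^ 2 := by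
      rw [Finset.mul_sum, ← Finset.sum_sub_distrib]
      exact Finset.sum_congr rfl fun v _ => by ring
    rw [hGr] at hG
    -- variance identity
    have hvar : (∑ v, (θ u v * p v) * (x v) ^ 2) - W * xb ^ 2
        = ∑ v, (θ u v * p v) * (x v - xb) ^ 2 := by
      have h1 : ∑ v, (θ u v * p v) * (x v - xb) ^ 2
          = ∑ v, ((θ u v * p v) * (x v) ^ 2
            - 2 * xb * ((θ u v * p v) * x v) + (θ u v * p v) * xb ^ 2) :=
        Finset.sum_congr rfl fun v _ => by ring
      rw [h1, Finset.sum_add_distrib, Finset.sum_sub_distrib, ← Finset.mul_sum,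
        hsum_wx, ← Finset.sum_mul, ← hWdef]
      ring
    -- two-point lower bound on the variance
    have hpair : (θ u v' * p v') * (θ u w' * p w') / (θ u v' * p v' + θ u w' * p w')
        * (x v' - x w') ^ 2 ≤ ∑ v, (θ u v * p v) * (x v - xb) ^ 2 := by
      have h2 := hmg_two_point (θ u v' * p v') (θ u w' * p w')
        (x v' - xb) (x w' - xb) hlam1 hlam2
      rw [sub_sub_sub_cancel_right] at h2
      refine le_trans h2 ?_
      have h3 : (θ u v' * p v') * (x v' - xb) ^ 2 + (θ u w' * p w') * (x w' - xb) ^ 2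
          = ∑ v ∈ ({v', w'} : Finset S), (θ u v * p v) * (x v - xb) ^ 2 := by
        rw [Finset.sum_pair hvw]
      rw [h3]
      exact Finset.sum_le_sum_of_subset_of_nonneg (Finset.subset_univ _)
        (fun v _ _ => mul_nonneg (hwnn u v) (sq_nonneg _))
    -- combine
    rw [hQ u, ← hxbdef]
    have hfinal : d₂ / 2 * ((∑ v, (θ u v * p v) * (x v) ^ 2) - W * xb ^ 2)
        ≤ (∑ v, (θ u v * p v) * f (x v)) - W * f xb := by linarith
    calc (d₂ / 2) * ((θ u v' * p v') * (θ u w' * p w') / (θ u v' * p v' + θ u w' * p w'))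
          * (x v' - x w') ^ 2
        ≤ d₂ / 2 * ∑ v, (θ u v * p v) * (x v - xb) ^ 2 := by
          rw [mul_assoc]
          exact mul_le_mul_of_nonneg_left hpair (by linarith)
      _ = d₂ / 2 * ((∑ v, (θ u v * p v) * (x v) ^ 2) - W * xb ^ 2) := by rw [hvar]
      _ ≤ (∑ v, (θ u v * p v) * f (x v)) - W * f xb := hfinal
end
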